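/- arXiv:math/0607633 — 3 statements merged into one kernel-verified Lean document; each statement's English description precedes it below -/
import Mathlib

section
/- Fix λ > 0 and v > 0. For Δ > 0 and u > 0 write z(Δ, u) = (λ/v)·√u and r(Δ, u) = [ √u · v · (1 + Δλ) · I_0(z(Δ,u)) + u·λ·I_1(z(Δ,u)) ] / [ v·λ·( √u·I_0(z(Δ,u)) + v·Δ·I_1(z(Δ,u)) ) ]. Then r(Δ, u) → 1/λ as (Δ, u) → (0, 0) along Δ > 0, u > 0. -/
/-!
Squeezing the series of `I_ν` between its first term and that term times `exp (x² / 4)` gives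
`I_ν(x) ~ (x/2)^ν / ν!` as `x → 0⁺`; in particular `I₀(z) → 1` and `I₁(z) / √u → λ / (2v)`.
After dividing numerator and denominator by `√u`, the summand becomes a continuous expression
in `Δ`, `u`, `I₀(z)` and `I₁(z) / √u`, whose value at the limit point is `v / (v λ) = 1 / λ`.
-/

open Filter

/-- The modified Bessel function of the first kind of integer order `ν`,
defined by its power series. -/
noncomputable def besselI (ν : ℕ) (x : ℝ) : ℝ :=
  ∑' k : ℕ, (x / 2) ^ (2 * k + ν) / ((Nat.factorial k : ℝ) * Nat.factorial (k + ν))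

open Real Topology
open scoped Nat

lemma norm_besselI_term_le (ν : ℕ) (x : ℝ) (k : ℕ) :
    ‖(x / 2) ^ (2 * k + ν) / ((k ! : ℝ) * (k + ν)!)‖
      ≤ |x / 2| ^ ν / ν ! * ((x / 2) ^ 2) ^ k / k ! := by
  have hfac : (k ! : ℝ) * ν ! ≤ k ! * (k + ν)! := by
    gcongr; exact Nat.le_add_left ν k
  rw [norm_div, norm_eq_abs, norm_eq_abs, abs_of_pos (a := (k ! : ℝ) * (k + ν)!) (by positivity),
    abs_pow, pow_add, pow_mul, sq_abs]
  calc ((x / 2) ^ 2) ^ k * |x / 2| ^ ν / (k ! * (k + ν)!)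
      ≤ ((x / 2) ^ 2) ^ k * |x / 2| ^ ν / (k ! * ν !) := by gcongr
    _ = _ := by ring

lemma summable_besselI_term (ν : ℕ) (x : ℝ) :
    Summable fun k : ℕ => (x / 2) ^ (2 * k + ν) / ((k ! : ℝ) * (k + ν)!) :=
  .of_norm_bounded (((summable_pow_div_factorial ((x / 2) ^ 2)).mul_left (|x / 2| ^ ν / ν !)).congr
    fun k => by ring) (norm_besselI_term_le ν x)

lemma abs_besselI_le (ν : ℕ) (x : ℝ) :
    |besselI ν x| ≤ |x / 2| ^ ν / ν ! * exp ((x / 2) ^ 2) := by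
  rw [exp_eq_exp_ℝ]
  refine tsum_of_norm_bounded ?_ (norm_besselI_term_le ν x)
  exact ((NormedSpace.expSeries_div_hasSum_exp _).mul_left (|x / 2| ^ ν / ν !)).congr_fun
    fun k => by ring

lemma pow_div_factorial_le_besselI (ν : ℕ) {x : ℝ} (hx : 0 ≤ x) :
    (x / 2) ^ ν / ν ! ≤ besselI ν x := by
  simpa [besselI] using (summable_besselI_term ν x).le_tsum 0 fun k _ => by positivity

lemma tendsto_besselI_div_pow (ν : ℕ) :
    Tendsto (fun x => besselI ν x / (x / 2) ^ ν) (𝓝[>] 0) (𝓝 (1 / ν !)) := by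
  have hexp : Tendsto (fun x : ℝ => 1 / ν ! * exp ((x / 2) ^ 2)) (𝓝[>] 0) (𝓝 (1 / ν !)) := by
    have : Continuous fun x : ℝ => 1 / ν ! * exp ((x / 2) ^ 2) := by fun_prop
    simpa using this.continuousWithinAt (s := Set.Ioi 0) (x := 0) |>.tendsto
  refine tendsto_of_tendsto_of_tendsto_of_le_of_le' tendsto_const_nhds hexp ?_ ?_ <;>
    filter_upwards [self_mem_nhdsWithin] with x (hx : 0 < x)
  · rw [le_div_iff₀ (by positivity), one_div_mul_eq_div]
    exact pow_div_factorial_le_besselI ν hx.le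
  · rw [div_le_iff₀ (by positivity)]
    calc besselI ν x ≤ |x / 2| ^ ν / ν ! * exp ((x / 2) ^ 2) :=
          (le_abs_self _).trans (abs_besselI_le ν x)
      _ = _ := by rw [abs_of_pos (by positivity)]; ring

lemma tendsto_sqrt_nhdsGT_zero : Tendsto (√·) (𝓝[>] 0) (𝓝[>] 0) :=
  tendsto_nhdsWithin_of_tendsto_nhds_of_eventually_within _
    (by simpa using continuous_sqrt.continuousWithinAt.tendsto (s := Set.Ioi 0) (x := 0))
    (eventually_nhdsWithin_of_forall fun _ hx => sqrt_pos.2 hx)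

lemma tendsto_besselI_mul_sqrt_div_pow (ν : ℕ) {c : ℝ} (hc : 0 < c) :
    Tendsto (fun u => besselI ν (c * √u) / √u ^ ν) (𝓝[>] 0) (𝓝 ((c / 2) ^ ν / ν !)) := by
  have hz : Tendsto (fun u => c * √u) (𝓝[>] 0) (𝓝[>] 0) := by
    simpa using TendstoNhdsWithinIoi.const_mul hc tendsto_sqrt_nhdsGT_zero
  have h := ((tendsto_besselI_div_pow ν).comp hz).const_mul ((c / 2) ^ ν)
  rw [mul_one_div] at h
  refine h.congr' ?_
  filter_upwards [self_mem_nhdsWithin] with u (hu : 0 < u)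
  have : 0 < √u := sqrt_pos.2 hu
  simp only [Function.comp_apply]
  field_simp
  rw [mul_div_right_comm, mul_pow]
  ring

lemma logLik_deriv_summand_eq {lam v Δ u s A B : ℝ} (hs : s ≠ 0) (hu : s ^ 2 = u) :
    (s * v * (1 + Δ * lam) * A + u * lam * B) / (v * lam * (s * A + v * Δ * B))
      = (v * (1 + Δ * lam) * A + u * lam * (B / s)) / (v * lam * (A + v * Δ * (B / s))) := by
  subst hu
  rw [← mul_div_mul_left _ (v * lam * (A + v * Δ * (B / s))) hs]
  congr 1 <;> field_simp

/-- The λ-derivative of a single log-likelihood summand tends to `1/λ`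
as `(Δ, u) → (0, 0)` along `Δ > 0`, `u > 0`. -/
theorem logLik_deriv_summand_tendsto (lam v : ℝ) (hlam : 0 < lam) (hv : 0 < v) :
    Tendsto
      (fun p : ℝ × ℝ =>
        (Real.sqrt p.2 * v * (1 + p.1 * lam) *
            besselI 0 ((lam / v) * Real.sqrt p.2)
          + p.2 * lam * besselI 1 ((lam / v) * Real.sqrt p.2)) /
        (v * lam * (Real.sqrt p.2 * besselI 0 ((lam / v) * Real.sqrt p.2)
          + v * p.1 * besselI 1 ((lam / v) * Real.sqrt p.2))))
      ((nhdsWithin 0 (Set.Ioi 0)) ×ˢ (nhdsWithin 0 (Set.Ioi 0)))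
      (nhds (1 / lam)) := by
  set F : Filter (ℝ × ℝ) := 𝓝[>] 0 ×ˢ 𝓝[>] 0
  have hc : 0 < lam / v := by positivity
  have hΔ : Tendsto (fun p : ℝ × ℝ => p.1) F (𝓝 0) := tendsto_fst.mono_right nhdsWithin_le_nhds
  have hu : Tendsto (fun p : ℝ × ℝ => p.2) F (𝓝[>] 0) := tendsto_snd
  have hI₀ : Tendsto (fun p : ℝ × ℝ => besselI 0 (lam / v * √p.2)) F (𝓝 1) := by
    simpa [Function.comp_def] using (tendsto_besselI_mul_sqrt_div_pow 0 hc).comp hu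
  have hI₁ : Tendsto (fun p : ℝ × ℝ => besselI 1 (lam / v * √p.2) / √p.2) F
      (𝓝 (lam / v / 2)) := by
    simpa [Function.comp_def] using (tendsto_besselI_mul_sqrt_div_pow 1 hc).comp hu
  have hnum := ((((hΔ.mul_const lam).const_add 1).const_mul v).mul hI₀).add
    (((hu.mono_right nhdsWithin_le_nhds).mul_const lam).mul hI₁)
  have hden := (hI₀.add ((hΔ.const_mul v).mul hI₁)).const_mul (v * lam)
  have hlim := hnum.div hden (by simp [hlam.ne', hv.ne'])
  rw [show (v * (1 + 0 * lam) * 1 + 0 * lam * (lam / v / 2)) /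
      (v * lam * (1 + v * 0 * (lam / v / 2))) = 1 / lam by field_simp; ring] at hlim
  refine hlim.congr' ?_
  filter_upwards [hu self_mem_nhdsWithin] with p (hp : 0 < p.2)
  exact (logLik_deriv_summand_eq (sqrt_pos.2 hp).ne' (sq_sqrt hp.le)).symm
end

section
/- (Deterministic core of Theorem 2.) Fix λ > 0, v > 0, T > 0 and a natural number N. For each n ≥ 1 let Δ_n = T/n and let u_{n,1}, …, u_{n,N} be real numbers with 0 < u_{n,i} ≤ v²·Δ_n² for each i. Define the approximated score F_n(λ) = −n·Δ_n + ∑_{i=1}^{N} [ I_0(z_{n,i})·(1 + λΔ_n/2) + ( λ√u_{n,i}/v + vΔ_n/√u_{n,i} )·I_1(z_{n,i}) + (λΔ_n/2)·I_2(z_{n,i}) ] / [ λ·I_0(z_{n,i}) + (λ·v·Δ_n/√u_{n,i})·I_1(z_{n,i}) ], where z_{n,i} = (λ/v)·√u_{n,i}. Then F_n(λ) → −T + N/λ as n → ∞. -/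
open Filter

/-!
With `z = (λ/v)·√u`, which tends to `0` because `u ≤ v²Δ²`, the factors `λ√u/v` and `vΔ/√u`
are `z` and `λΔ/z`, so each summand of the score is a rational expression in `Δ`, `I₀(z)`, `I₁(z)`, `I₁(z)/z` and `I₂(z)`. Since
`I_ν(x) = (x/2)^ν S_ν(x²/4)` with `1/ν! ≤ S_ν(y) ≤ e^y/ν!` for `y ≥ 0`, as `z → 0` we get
`I₀(z) → 1`, `I₁(z), I₂(z) → 0` and `I₁(z)/z → 1/2`, so every summand tends to `1/λ`, while
`-n·Δ_n = -T`.
-/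

open Topology Nat

noncomputable def besselISeries (ν : ℕ) (y : ℝ) : ℝ :=
  ∑' k : ℕ, y ^ k / ((k ! : ℝ) * (k + ν)!)

theorem besselI_eq_mul_besselISeries (ν : ℕ) (x : ℝ) :
    besselI ν x = (x / 2) ^ ν * besselISeries ν (x ^ 2 / 4) := by
  rw [besselI, besselISeries, ← tsum_mul_left]
  congr 1 with k
  rw [pow_add, pow_mul, mul_div_assoc', mul_comm]
  ring

section

variable (ν : ℕ) {y : ℝ}

theorem besselISeries_term_le (hy : 0 ≤ y) (k : ℕ) :
    y ^ k / ((k ! : ℝ) * (k + ν)!) ≤ y ^ k / k ! / ν ! := by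
  rw [div_div]
  gcongr
  exact Nat.le_add_left ν k

theorem summable_besselISeries (hy : 0 ≤ y) :
    Summable fun k : ℕ => y ^ k / ((k ! : ℝ) * (k + ν)!) :=
  .of_nonneg_of_le (fun _ => by positivity) (besselISeries_term_le ν hy)
    ((Real.summable_pow_div_factorial y).div_const _)

theorem inv_factorial_le_besselISeries (hy : 0 ≤ y) : (ν ! : ℝ)⁻¹ ≤ besselISeries ν y := by
  simpa [besselISeries] using (summable_besselISeries ν hy).le_tsum 0 fun k _ => by positivity

theorem besselISeries_le (hy : 0 ≤ y) : besselISeries ν y ≤ Real.exp y / ν ! := by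
  rw [Real.exp_eq_exp_ℝ, NormedSpace.exp_eq_tsum_div, ← tsum_div_const]
  exact (summable_besselISeries ν hy).tsum_le_tsum (besselISeries_term_le ν hy)
    ((Real.summable_pow_div_factorial y).div_const _)

theorem tendsto_besselISeries : Tendsto (besselISeries ν) (𝓝[≥] 0) (𝓝 (ν ! : ℝ)⁻¹) := by
  have hexp : Tendsto (fun y => Real.exp y / ν !) (𝓝[≥] 0) (𝓝 (ν ! : ℝ)⁻¹) := by
    simpa using ((Real.continuous_exp.tendsto 0).mono_left nhdsWithin_le_nhds).div_const (ν ! : ℝ)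
  refine tendsto_of_tendsto_of_tendsto_of_le_of_le' tendsto_const_nhds hexp ?_ ?_ <;>
    filter_upwards [self_mem_nhdsWithin] with y hy
  exacts [inv_factorial_le_besselISeries ν hy, besselISeries_le ν hy]

end

theorem tendsto_sq_div_four_nhdsGE : Tendsto (fun x : ℝ => x ^ 2 / 4) (𝓝 0) (𝓝[≥] 0) :=
  tendsto_nhdsWithin_iff.mpr ⟨by simpa using ((continuous_pow 2).div_const (4:ℝ)).tendsto 0,
    .of_forall fun x => by simp only [Set.mem_Ici]; positivity⟩

theorem tendsto_besselISeries_sq_div_four (ν : ℕ) :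
    Tendsto (fun x => besselISeries ν (x ^ 2 / 4)) (𝓝 0) (𝓝 (ν ! : ℝ)⁻¹) :=
  (tendsto_besselISeries ν).comp tendsto_sq_div_four_nhdsGE

theorem tendsto_besselI_zero : Tendsto (besselI 0) (𝓝 0) (𝓝 1) := by
  have h := tendsto_besselISeries_sq_div_four 0
  rw [factorial_zero, cast_one, inv_one] at h
  exact h.congr fun x => by simp [besselI_eq_mul_besselISeries]

theorem tendsto_besselI_of_ne_zero {ν : ℕ} (hν : ν ≠ 0) : Tendsto (besselI ν) (𝓝 0) (𝓝 0) := by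
  have hpow : Tendsto (fun x : ℝ => (x / 2) ^ ν) (𝓝 0) (𝓝 0) := by
    simpa [hν] using ((tendsto_id (x := 𝓝 (0:ℝ))).div_const 2).pow ν
  simpa using (hpow.mul (tendsto_besselISeries_sq_div_four ν)).congr
    fun x => (besselI_eq_mul_besselISeries ν x).symm

theorem tendsto_besselI_one_div_self :
    Tendsto (fun x => besselI 1 x / x) (𝓝[≠] 0) (𝓝 (1 / 2)) := by
  have h := ((tendsto_besselISeries_sq_div_four 1).mono_left
    (nhdsWithin_le_nhds (s := {0}ᶜ))).div_const 2
  refine (h.congr' ?_).trans (by norm_num)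
  filter_upwards [self_mem_nhdsWithin] with x (hx : x ≠ 0)
  rw [besselI_eq_mul_besselISeries]
  field_simp

theorem tendsto_score_term {α : Type*} {l : Filter α} {lam v : ℝ} (hlam : lam ≠ 0) (hv : v ≠ 0)
    {Δ s : α → ℝ} (hΔ : Tendsto Δ l (𝓝 0)) (hs : Tendsto s l (𝓝[≠] 0)) :
    Tendsto (fun a =>
      (besselI 0 ((lam / v) * s a) * (1 + lam * Δ a / 2)
        + (lam * s a / v + v * Δ a / s a) * besselI 1 ((lam / v) * s a)
        + (lam * Δ a / 2) * besselI 2 ((lam / v) * s a)) /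
      (lam * besselI 0 ((lam / v) * s a)
        + (lam * v * Δ a / s a) * besselI 1 ((lam / v) * s a)))
      l (𝓝 (1 / lam)) := by
  have hs_ne := eventually_mem_of_tendsto_nhdsWithin hs
  set z := fun a => lam / v * s a
  have hz0 : Tendsto z l (𝓝 0) := by
    simpa using (tendsto_nhds_of_tendsto_nhdsWithin hs).const_mul (lam / v)
  have hz : Tendsto z l (𝓝[≠] 0) := tendsto_nhdsWithin_iff.mpr ⟨hz0, by
    filter_upwards [hs_ne] with a (ha : s a ≠ 0)
    exact mul_ne_zero (div_ne_zero hlam hv) ha⟩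
  have hI0 := tendsto_besselI_zero.comp hz0
  have hI1 := (tendsto_besselI_of_ne_zero one_ne_zero).comp hz0
  have hI2 := (tendsto_besselI_of_ne_zero two_ne_zero).comp hz0
  have hI1z := tendsto_besselI_one_div_self.comp hz
  have hnum : Tendsto (fun a => besselI 0 (z a) * (1 + lam * Δ a / 2) + z a * besselI 1 (z a)
      + lam * Δ a * (besselI 1 (z a) / z a) + lam * Δ a / 2 * besselI 2 (z a)) l (𝓝 1) := by
    simpa using (((hI0.mul (((hΔ.const_mul lam).div_const 2).const_add 1)).add (hz0.mul hI1)).add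
      ((hΔ.const_mul lam).mul hI1z)).add (((hΔ.const_mul lam).div_const 2).mul hI2)
  have hden : Tendsto (fun a => lam * besselI 0 (z a) + lam ^ 2 * Δ a * (besselI 1 (z a) / z a))
      l (𝓝 lam) := by
    simpa using (hI0.const_mul lam).add ((hΔ.const_mul (lam ^ 2)).mul hI1z)
  refine (hnum.div hden hlam).congr' ?_
  filter_upwards [hs_ne] with a (ha : s a ≠ 0)
  simp only [Pi.div_apply, z]
  field_simp
  ring

theorem score_tendsto_general (lam v T : ℝ) (hlam : 0 < lam) (hv : 0 < v)
    (N : ℕ) (u : ℕ → Fin N → ℝ)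
    (hu : ∀ n : ℕ, 1 ≤ n → ∀ i : Fin N,
      0 < u n i ∧ u n i ≤ v ^ 2 * (T / n) ^ 2) :
    Tendsto
      (fun n : ℕ =>
        -(n : ℝ) * (T / n) + ∑ i : Fin N,
          (besselI 0 ((lam / v) * Real.sqrt (u n i)) * (1 + lam * (T / n) / 2)
            + (lam * Real.sqrt (u n i) / v + v * (T / n) / Real.sqrt (u n i)) *
                besselI 1 ((lam / v) * Real.sqrt (u n i))
            + (lam * (T / n) / 2) * besselI 2 ((lam / v) * Real.sqrt (u n i))) /
          (lam * besselI 0 ((lam / v) * Real.sqrt (u n i))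
            + (lam * v * (T / n) / Real.sqrt (u n i)) *
                besselI 1 ((lam / v) * Real.sqrt (u n i))))
      atTop (nhds (-T + (N : ℝ) / lam)) := by
  have hΔ : Tendsto (fun n : ℕ => T / n) atTop (𝓝 0) := tendsto_const_div_atTop_nhds_zero_nat T
  have hu_pos (i : Fin N) : ∀ᶠ n in atTop, 0 < u n i :=
    eventually_atTop.mpr ⟨1, fun n hn => (hu n hn i).1⟩
  have hsqrt (i : Fin N) : Tendsto (fun n => Real.sqrt (u n i)) atTop (𝓝[≠] 0) := by
    have hu0 : Tendsto (fun n => u n i) atTop (𝓝 0) := by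
      refine squeeze_zero' ((hu_pos i).mono fun n h => h.le)
        (eventually_atTop.mpr ⟨1, fun n hn => (hu n hn i).2⟩) ?_
      simpa using (hΔ.pow 2).const_mul (v ^ 2)
    refine tendsto_nhdsWithin_iff.mpr ⟨by simpa using hu0.sqrt, ?_⟩
    filter_upwards [hu_pos i] with n hn using (Real.sqrt_pos.mpr hn).ne'
  have hsum := tendsto_finsetSum Finset.univ fun i _ =>
    tendsto_score_term hlam.ne' hv.ne' hΔ (hsqrt i)
  rw [Finset.sum_const, Finset.card_univ, Fintype.card_fin, nsmul_eq_mul, mul_one_div] at hsum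
  refine (tendsto_const_nhds.add hsum).congr' ?_
  filter_upwards [eventually_ne_atTop 0] with n hn
  rw [neg_mul, mul_div_cancel₀ T (Nat.cast_ne_zero.mpr hn)]

/-- Deterministic core of Theorem 2: the approximated score converges to
`−T + N/λ` as `n → ∞` under the high frequency scheme `Δ_n = T/n`. -/
theorem score_tendsto (lam v T : ℝ) (hlam : 0 < lam) (hv : 0 < v) (hT : 0 < T)
    (N : ℕ) (u : ℕ → Fin N → ℝ)
    (hu : ∀ n : ℕ, 1 ≤ n → ∀ i : Fin N,
      0 < u n i ∧ u n i ≤ v ^ 2 * (T / n) ^ 2) :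
    Tendsto
      (fun n : ℕ =>
        -(n : ℝ) * (T / n) + ∑ i : Fin N,
          (besselI 0 ((lam / v) * Real.sqrt (u n i)) * (1 + lam * (T / n) / 2)
            + (lam * Real.sqrt (u n i) / v + v * (T / n) / Real.sqrt (u n i)) *
                besselI 1 ((lam / v) * Real.sqrt (u n i))
            + (lam * (T / n) / 2) * besselI 2 ((lam / v) * Real.sqrt (u n i))) /
          (lam * besselI 0 ((lam / v) * Real.sqrt (u n i))
            + (lam * v * (T / n) / Real.sqrt (u n i)) *
                besselI 1 ((lam / v) * Real.sqrt (u n i))))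
      atTop (nhds (-T + (N : ℝ) / lam)) :=
  score_tendsto_general lam v T hlam hv N u hu
end

section
/- (Single-term strict concavity.) Fix real numbers v > 0, Δ > 0 and u with 0 < u ≤ v²·Δ². Then the function h(λ) = log( λ·I_0((λ/v)·√u) + (λ·v·Δ/√u)·I_1((λ/v)·√u) ), defined for λ > 0, is twice differentiable on (0, ∞) and satisfies h''(λ) < 0 for every λ > 0. -/
/-!
With `s = √u / v` and `β = vΔ / √u ≥ 1`, the argument of the logarithm is `K(λ s) / s`, where
`K(z) = z I₀(z) + β z I₁(z)`. From `I₀' = I₁` and `(z I₁)' = z I₀` alone one gets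
`K'² - K K'' = (β² - 1) z (z (I₀² - I₁²) - I₀ I₁) + I₀² + β z (I₀² - I₁²)`,
which is positive on `(0, ∞)` because `I₁ < I₀` and `I₀ I₁ < z (I₀² - I₁²)` there. Both
inequalities follow by showing that a suitable combination vanishing at `0` has a positive derivative.
-/

open Real Filter Topology Nat

noncomputable def besselTerm (ν k : ℕ) (x : ℝ) : ℝ :=
  (x / 2) ^ (2 * k + ν) / ((k ! : ℝ) * (k + ν)!)

lemma besselI_eq_tsum (ν : ℕ) (x : ℝ) : besselI ν x = ∑' k, besselTerm ν k x := rfl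

lemma summable_pow_two_mul_add_div_factorial (R : ℝ) (ν : ℕ) :
    Summable fun k : ℕ => R ^ (2 * k + ν) / k ! := by
  have h := (Real.summable_pow_div_factorial (R ^ 2)).mul_left (R ^ ν)
  refine h.congr fun k => ?_
  rw [pow_add, pow_mul]
  ring

lemma abs_besselTerm_le (ν k : ℕ) {R y : ℝ} (hy : |y| ≤ R) :
    |besselTerm ν k y| ≤ R ^ (2 * k + ν) / k ! := by
  have hy2 : |y / 2| ≤ R := by rw [abs_div, abs_two]; linarith [abs_nonneg y]
  have hfac : (1 : ℝ) ≤ (k + ν)! := mod_cast (k + ν).factorial_pos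
  have hden : (0 : ℝ) < k ! * (k + ν)! := by positivity
  rw [besselTerm, abs_div, abs_pow, abs_of_pos hden]
  have hR : 0 ≤ R := (abs_nonneg y).trans hy
  gcongr
  exact le_mul_of_one_le_right (by positivity) hfac

lemma summable_besselTerm (ν : ℕ) (x : ℝ) : Summable fun k => besselTerm ν k x :=
  .of_norm_bounded (summable_pow_two_mul_add_div_factorial |x| ν)
    fun k => abs_besselTerm_le ν k le_rfl

lemma hasDerivAt_tsum_of_locally_bounded {f f' : ℕ → ℝ → ℝ}
    (hf : ∀ k y, HasDerivAt (f k) (f' k y) y)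
    (hbound : ∀ R, ∃ u : ℕ → ℝ, Summable u ∧ ∀ k y, |y| ≤ R → |f' k y| ≤ u k)
    (hsum : ∀ y, Summable fun k => f k y) (x : ℝ) :
    HasDerivAt (fun y => ∑' k, f k y) (∑' k, f' k x) x := by
  obtain ⟨u, hu, hbd⟩ := hbound (|x| + 1)
  have hx : x ∈ Metric.ball (0 : ℝ) (|x| + 1) := by simp
  refine hasDerivAt_tsum_of_isPreconnected hu Metric.isOpen_ball (convex_ball 0 _).isPreconnected
    (fun k y _ => hf k y) (fun k y hy => hbd k y ?_) hx (hsum x) hx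
  simpa using (Metric.mem_ball.mp hy).le

lemma hasDerivAt_besselTerm_zero_succ (k : ℕ) (x : ℝ) :
    HasDerivAt (besselTerm 0 (k + 1)) (besselTerm 1 k x) x := by
  have h := (((hasDerivAt_id' x).div_const 2).pow (2 * (k + 1) + 0)).div_const
    (((k + 1)! : ℝ) * (k + 1 + 0)!)
  refine h.congr_deriv ?_
  rw [besselTerm, show 2 * (k + 1) + 0 - 1 = 2 * k + 1 by omega, factorial_succ]
  push_cast
  field_simp
  ring

lemma hasDerivAt_mul_besselTerm_one (k : ℕ) (x : ℝ) :
    HasDerivAt (fun y => y * besselTerm 1 k y) (x * besselTerm 0 k x) x := by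
  have h := ((((hasDerivAt_id' x).div_const 2).fun_pow (2 * k + 2)).div_const
    ((k ! : ℝ) * (k + 1)!)).const_mul 2
  refine (h.congr_deriv ?_).congr_of_eventuallyEq (.of_forall fun y => ?_)
  · rw [besselTerm, show 2 * k + 2 - 1 = 2 * k + 1 by omega, factorial_succ, pow_succ]
    simp only [add_zero]
    push_cast
    field_simp
  · simp only [besselTerm]
    ring

theorem hasDerivAt_besselI_zero (x : ℝ) : HasDerivAt (besselI 0) (besselI 1 x) x := by
  have hshift : besselI 0 = fun y => 1 + ∑' k, besselTerm 0 (k + 1) y := by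
    funext y
    rw [besselI_eq_tsum, (summable_besselTerm 0 y).tsum_eq_zero_add]
    simp [besselTerm]
  rw [hshift]
  refine (hasDerivAt_tsum_of_locally_bounded hasDerivAt_besselTerm_zero_succ (fun R => ?_)
    (fun y => (summable_nat_add_iff 1).mpr (summable_besselTerm 0 y)) x).const_add 1
  exact ⟨_, summable_pow_two_mul_add_div_factorial R 1, fun k y hy => abs_besselTerm_le 1 k hy⟩

theorem hasDerivAt_mul_besselI_one (x : ℝ) :
    HasDerivAt (fun y => y * besselI 1 y) (x * besselI 0 x) x := by
  simp only [besselI_eq_tsum, ← tsum_mul_left]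
  refine hasDerivAt_tsum_of_locally_bounded hasDerivAt_mul_besselTerm_one (fun R => ?_)
    (fun y => (summable_besselTerm 1 y).mul_left y) x
  refine ⟨_, (summable_pow_two_mul_add_div_factorial R 0).mul_left R, fun k y hy => ?_⟩
  rw [abs_mul]
  exact mul_le_mul hy (abs_besselTerm_le 0 k hy) (abs_nonneg _) ((abs_nonneg y).trans hy)

lemma besselTerm_le_besselI {ν : ℕ} {x : ℝ} (h : ∀ k, 0 ≤ besselTerm ν k x) (k : ℕ) :
    besselTerm ν k x ≤ besselI ν x :=
  (summable_besselTerm ν x).le_tsum k fun j _ => h j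

theorem one_le_besselI_zero (x : ℝ) : 1 ≤ besselI 0 x := by
  have h := besselTerm_le_besselI (ν := 0) (x := x) (fun k => ?_) 0
  · simpa [besselTerm] using h
  · rw [besselTerm, add_zero, pow_mul]
    positivity

theorem besselI_one_pos {x : ℝ} (hx : 0 < x) : 0 < besselI 1 x := by
  have h := besselTerm_le_besselI (ν := 1) (x := x) (fun k => by rw [besselTerm]; positivity) 0
  simp only [besselTerm] at h
  norm_num at h
  linarith

lemma pos_of_hasDerivAt_of_pos {f f' : ℝ → ℝ} (hf : ∀ x, HasDerivAt f (f' x) x) (h0 : f 0 = 0)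
    (hf' : ∀ x, 0 < x → 0 < f' x) {x : ℝ} (hx : 0 < x) : 0 < f x := by
  obtain ⟨c, hc, hslope⟩ := exists_hasDerivAt_eq_slope f f' hx
    (fun y _ => (hf y).continuousAt.continuousWithinAt) (fun y _ => hf y)
  rw [h0, sub_zero, sub_zero, eq_div_iff hx.ne'] at hslope
  rw [← hslope]
  exact mul_pos (hf' c hc.1) hx

theorem besselI_one_lt_besselI_zero {x : ℝ} (hx : 0 < x) : besselI 1 x < besselI 0 x := by
  -- `D = x (I₀ - I₁)` satisfies `D' + D = I₀`, so `eˣ D` has derivative `eˣ I₀ > 0`.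
  have hpos : 0 < exp x * (x * besselI 0 x - x * besselI 1 x) := by
    refine pos_of_hasDerivAt_of_pos (f := fun y => exp y * (y * besselI 0 y - y * besselI 1 y))
      (f' := fun y => exp y * besselI 0 y) (fun y => ?_) (by simp)
      (fun y _ => mul_pos (exp_pos y) (zero_lt_one.trans_le (one_le_besselI_zero y))) hx
    refine ((hasDerivAt_exp y).mul (((hasDerivAt_id' y).fun_mul (hasDerivAt_besselI_zero y)).fun_sub
      (hasDerivAt_mul_besselI_one y))).congr_deriv ?_
    ring
  have := (mul_pos_iff_of_pos_left (exp_pos x)).mp hpos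
  nlinarith

theorem mul_besselI_zero_mul_besselI_one_lt {z : ℝ} (hz : 0 < z) :
    besselI 0 z * besselI 1 z < z * (besselI 0 z ^ 2 - besselI 1 z ^ 2) := by
  have hpos : 0 < (z * besselI 0 z) ^ 2 - (z * besselI 1 z) ^ 2
      - besselI 0 z * (z * besselI 1 z) := by
    refine pos_of_hasDerivAt_of_pos (f := fun y => (y * besselI 0 y) ^ 2 - (y * besselI 1 y) ^ 2
      - besselI 0 y * (y * besselI 1 y)) (f' := fun y => y * (besselI 0 y ^ 2 - besselI 1 y ^ 2))
      (fun y => ?_) (by simp) (fun y hy => ?_) hz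
    · have h0 := hasDerivAt_besselI_zero y
      have h1 := hasDerivAt_mul_besselI_one y
      refine ((((hasDerivAt_id' y).fun_mul h0).pow 2).sub (h1.pow 2)).sub (h0.mul h1) |>.congr_deriv ?_
      ring
    · have hlt := besselI_one_lt_besselI_zero hy
      have h1 := besselI_one_pos hy
      exact mul_pos hy (by nlinarith)
  nlinarith

noncomputable def besselMix (β z : ℝ) : ℝ := z * besselI 0 z + β * (z * besselI 1 z)

noncomputable def besselMix' (β z : ℝ) : ℝ := besselI 0 z + z * besselI 1 z + β * (z * besselI 0 z)

noncomputable def besselMix'' (β z : ℝ) : ℝ :=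
  besselI 1 z + z * besselI 0 z + β * (besselI 0 z + z * besselI 1 z)

lemma hasDerivAt_besselMix (β z : ℝ) : HasDerivAt (besselMix β) (besselMix' β z) z := by
  refine (((hasDerivAt_id' z).fun_mul (hasDerivAt_besselI_zero z)).add
    ((hasDerivAt_mul_besselI_one z).const_mul β)).congr_deriv ?_
  rw [besselMix']
  ring

lemma hasDerivAt_besselMix' (β z : ℝ) : HasDerivAt (besselMix' β) (besselMix'' β z) z := by
  refine (((hasDerivAt_besselI_zero z).add (hasDerivAt_mul_besselI_one z)).add
    (((hasDerivAt_id' z).fun_mul (hasDerivAt_besselI_zero z)).const_mul β)).congr_deriv ?_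
  rw [besselMix'']
  ring

lemma besselMix_pos {β z : ℝ} (hβ : 0 ≤ β) (hz : 0 < z) : 0 < besselMix β z := by
  have h0 := one_le_besselI_zero z
  have h1 := besselI_one_pos hz
  rw [besselMix]
  positivity

theorem besselMix_mul_besselMix''_lt {β z : ℝ} (hβ : 1 ≤ β) (hz : 0 < z) :
    besselMix β z * besselMix'' β z < besselMix' β z ^ 2 := by
  have ha := one_le_besselI_zero z
  have hb := besselI_one_pos hz
  have hφ := mul_besselI_zero_mul_besselI_one_lt hz
  set a := besselI 0 z
  set b := besselI 1 z
  have key : besselMix' β z ^ 2 - besselMix β z * besselMix'' β z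
      = (β ^ 2 - 1) * z * (z * (a ^ 2 - b ^ 2) - a * b) + (a ^ 2 + β * z * (a ^ 2 - b ^ 2)) := by
    simp only [besselMix, besselMix', besselMix'']
    ring
  have hβ2 : 0 ≤ (β ^ 2 - 1) * z := mul_nonneg (by nlinarith) hz.le
  have hsq : 0 < z * (a ^ 2 - b ^ 2) := (mul_pos (by linarith) hb).trans hφ
  nlinarith

lemma hasDerivAt_deriv_log {f f' : ℝ → ℝ} {f'' x : ℝ} (hf : ∀ y, HasDerivAt f (f' y) y)
    (hf' : HasDerivAt f' f'' x) (hx : f x ≠ 0) :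
    HasDerivAt (deriv fun y => log (f y)) ((f'' * f x - f' x * f' x) / f x ^ 2) x := by
  have hne : ∀ᶠ y in 𝓝 x, f y ≠ 0 := (hf x).continuousAt.eventually_ne hx
  refine (hf'.div (hf x) hx).congr_of_eventuallyEq ?_
  filter_upwards [hne] with y hy
  exact ((hf y).log hy).deriv

/-- Single-term strict concavity: one summand of the approximated
log-likelihood is twice differentiable on `(0, ∞)` with negative second
derivative. -/
theorem logLik_summand_strictly_concave (v Δ u : ℝ)
    (hv : 0 < v) (hΔ : 0 < Δ) (hu : 0 < u) (hu' : u ≤ v ^ 2 * Δ ^ 2) :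
    (∀ lam : ℝ, 0 < lam →
      DifferentiableAt ℝ
        (fun l : ℝ => Real.log
          (l * besselI 0 ((l / v) * Real.sqrt u)
            + (l * v * Δ / Real.sqrt u) * besselI 1 ((l / v) * Real.sqrt u))) lam ∧
      DifferentiableAt ℝ
        (deriv (fun l : ℝ => Real.log
          (l * besselI 0 ((l / v) * Real.sqrt u)
            + (l * v * Δ / Real.sqrt u) * besselI 1 ((l / v) * Real.sqrt u)))) lam) ∧
    (∀ lam : ℝ, 0 < lam →
      deriv (deriv (fun l : ℝ => Real.log
        (l * besselI 0 ((l / v) * Real.sqrt u)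
          + (l * v * Δ / Real.sqrt u) * besselI 1 ((l / v) * Real.sqrt u)))) lam
        < 0) := by
  have hsu : 0 < √u := sqrt_pos.mpr hu
  set s := √u / v
  have hs : 0 < s := div_pos hsu hv
  set β := v * Δ / √u
  have hβ : 1 ≤ β := by
    rw [one_le_div hsu, ← sqrt_sq (by positivity : 0 ≤ v * Δ)]
    exact sqrt_le_sqrt (by linarith)
  have hfun : (fun l : ℝ => log (l * besselI 0 ((l / v) * √u)
      + (l * v * Δ / √u) * besselI 1 ((l / v) * √u))) = fun l => log (besselMix β (l * s) / s) := by
    funext l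
    rw [besselMix, show l / v * √u = l * s by ring]
    congr 1
    simp only [s, β]
    field_simp
  have hF (l : ℝ) : HasDerivAt (fun l => besselMix β (l * s) / s) (besselMix' β (l * s)) l := by
    simpa [hs.ne'] using
      ((hasDerivAt_besselMix β (l * s)).comp l (hasDerivAt_mul_const s)).div_const s
  have hF' (l : ℝ) : HasDerivAt (fun l => besselMix' β (l * s)) (besselMix'' β (l * s) * s) l :=
    (hasDerivAt_besselMix' β (l * s)).comp (h := fun l => l * s) l (hasDerivAt_mul_const s)
  have hpos (l : ℝ) (hl : 0 < l) : 0 < besselMix β (l * s) / s :=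
    div_pos (besselMix_pos (by linarith) (mul_pos hl hs)) hs
  rw [hfun]
  refine ⟨fun l hl => ⟨((hF l).log (hpos l hl).ne').differentiableAt,
    (hasDerivAt_deriv_log hF (hF' l) (hpos l hl).ne').differentiableAt⟩, fun l hl => ?_⟩
  rw [(hasDerivAt_deriv_log hF (hF' l) (hpos l hl).ne').deriv]
  refine div_neg_of_neg_of_pos ?_ (pow_pos (hpos l hl) 2)
  have := besselMix_mul_besselMix''_lt hβ (mul_pos hl hs)
  field_simp
  linarith
end
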